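/- arXiv:1601.04911 — 5 statements merged into one kernel-verified Lean document; each statement's English description precedes it below -/
import Mathlib

section
/- Path lemma: Let ρ = ρ₀ρ₁⋯ρⱼ be a path (a nonempty string of subscripted operation symbols) and consider the algebra Alg(‖m,ρ,n‖) on finitely supported Z₂-vectors whose operations are defined by the chain of assignments in ‖m,ρ,n‖ (all other components default to 0), with all intermediate indices distinct (duplicate free). Then for any term t and any subterm s of t at path ρ, the value of t at component n equals the value of s at component m: t[n] = s[m]. -/
open FirstOrder Language

attribute [local instance] Classical.propDecidable

/-- A path entry: an operation symbol together with an argument position. -/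
abbrev PathEntry (L : Language) : Type _ := Σ n : ℕ, L.Functions n × Fin n

/-- `AtPath ρ t u` means: `u` is the (occurrence of a) subterm of `t` at the path `ρ`,
read from the root of `t`. -/
inductive AtPath {L : Language} {α : Type*} :
    List (PathEntry L) → L.Term α → L.Term α → Prop
  | nil (t : L.Term α) : AtPath [] t t
  | cons {n : ℕ} (f : L.Functions n) (ts : Fin n → L.Term α) (i : Fin n)
      {ρ : List (PathEntry L)} {u : L.Term α} :
      AtPath ρ (ts i) u → AtPath (⟨n, f, i⟩ :: ρ) (Term.func f ts) u

/-- The algebra `Alg(‖m,ρ,n‖)` on `Z₂`-vectors, determined by a path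
`ρ = ρ₀ρ₁⋯ρⱼ` (position 0 is outermost) and a chain of indices `c` with `c 0 = n`
(the target component) and `c ρ.length = m` (the source component):
the entry `ρₚ = fᵢ` contributes the assignment `f[c p] := xᵢ[c (p+1)]`
(plus the constant 1 at the innermost step `p = ρ.length - 1` when `tweak` is true).
All other components default to `0`, and all sums are taken mod 2. -/
noncomputable def pathAlg (L : Language) (ρ : List (PathEntry L)) (c : ℕ → ℕ)
    (tweak : Bool) : L.Structure (ℕ → ZMod 2) where
  funMap := fun {k} f xs idx =>
    ∑ p ∈ Finset.range ρ.length,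
      if hp : p < ρ.length then
        (if h : (ρ.get ⟨p, hp⟩).1 = k then
          (if (h ▸ (ρ.get ⟨p, hp⟩).2.1) = f ∧ idx = c p then
            xs (Fin.cast h (ρ.get ⟨p, hp⟩).2.2) (c (p + 1)) +
              (if tweak ∧ p = ρ.length - 1 then 1 else 0)
          else 0)
        else 0)
      else 0
  RelMap := fun _ _ => False

theorem entry_eval {L : Language} {k : ℕ} (g : PathEntry L) (f : L.Functions k) (i : Fin k)
    (hg : g = ⟨k, f, i⟩) :
    ∃ h : g.1 = k, (h ▸ g.2.1) = f ∧ Fin.cast h g.2.2 = i := by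
  subst hg; exact ⟨rfl, rfl, rfl⟩

theorem path_aux {L : Language} {α : Type*} (ρ : List (PathEntry L)) (c : ℕ → ℕ)
    (hdup : ∀ a b, a ≤ ρ.length → b ≤ ρ.length → c a = c b →
      a = b ∨ (a = 0 ∧ b = ρ.length) ∨ (a = ρ.length ∧ b = 0))
    (v : α → ℕ → ZMod 2)
    (ρ' : List (PathEntry L)) (t s : L.Term α) (hpath : AtPath ρ' t s) :
    ∀ q (hq : q + ρ'.length = ρ.length),
      (∀ j (hj : j < ρ'.length), ρ'.get ⟨j, hj⟩ = ρ.get ⟨q + j, by omega⟩) →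
      (letI := pathAlg L ρ c false;
        Term.realize v t (c q) = Term.realize v s (c ρ.length)) := by
  induction hpath with
  | nil t =>
    intro q hq _
    simp only [List.length_nil, Nat.add_zero] at hq
    rw [hq]
  | cons f ts i h ih =>
    rename_i k ρ'' u
    intro q hq hget
    have hqlt : q < ρ.length := by simp at hq; omega
    have hgetq : ρ.get ⟨q, hqlt⟩ = ⟨k, f, i⟩ := by
      have := hget 0 (by simp)
      simpa using this.symm
    letI := pathAlg L ρ c false
    have hrec := ih (q + 1) (by simp at hq ⊢; omega)
      (fun j hj => by
        have := hget (j + 1) (by simpa using Nat.succ_lt_succ hj)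
        simpa [Nat.add_assoc, Nat.add_comm 1 j] using this)
    show Structure.funMap f (fun i => Term.realize v (ts i)) (c q) = _
    rw [← hrec]
    show (∑ p ∈ Finset.range ρ.length, _) = _
    rw [Finset.sum_eq_single_of_mem q (Finset.mem_range.mpr hqlt)]
    · obtain ⟨he, h1, h2⟩ := entry_eval _ f i hgetq
      rw [dif_pos hqlt, dif_pos he, if_pos (⟨h1, rfl⟩ : _ ∧ c q = c q), h2]
      simp
    · intro p hp hpq
      have hplt : p < ρ.length := Finset.mem_range.mp hp
      rw [dif_pos hplt]
      split
      · rw [if_neg]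
        rintro ⟨-, hcc⟩
        rcases hdup q p (by omega) (by omega) hcc with h | ⟨h1, h2⟩ | ⟨h1, h2⟩ <;> omega
      · rfl

/-- Path lemma: if `ρ` is a nonempty path, the index chain `c` (with `c 0 = n` and
`c ρ.length = m`) is duplicate free (all indices distinct, except possibly `m = n`), and
`s` is a subterm of `t` at path `ρ`, then in `Alg(‖m,ρ,n‖)` we have `t[n] = s[m]` for
every valuation of the variables. -/
theorem path_lemma {L : Language} {α : Type*} (m n : ℕ) (ρ : List (PathEntry L))
    (hρ : ρ ≠ []) (c : ℕ → ℕ) (hc0 : c 0 = n) (hcl : c ρ.length = m)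
    (hdup : ∀ a b, a ≤ ρ.length → b ≤ ρ.length → c a = c b →
      a = b ∨ (a = 0 ∧ b = ρ.length) ∨ (a = ρ.length ∧ b = 0))
    (t s : L.Term α) (hpath : AtPath ρ t s) (v : α → ℕ → ZMod 2) :
    let _i : L.Structure (ℕ → ZMod 2) := pathAlg L ρ c false
    Term.realize v t n = Term.realize v s m := by
  intro _i
  rw [← hc0, ← hcl]
  exact path_aux ρ c hdup v ρ t s hpath 0 (by simp)
    (fun j hj => by congr 1; exact Fin.ext (Nat.zero_add j).symm)
end

section
/- Tweaked path lemma: With notation as in the path lemma, let ‖m,ρ,n‖' be identical to ‖m,ρ,n‖ except that its first assignment along ρ adds 1 mod 2 (i.e., f[b] := xᵢ[m] + 1 for the innermost step). Then in Alg(‖m,ρ,n‖'), for any term t with subterm s at path ρ, one has t[n] = s[m] + 1 (mod 2). In particular, t[n] ≠ s[m] always. -/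
/-! Along the path the indices `c q` are distinct, so at component `c q` exactly one summand of
the operation `ρ[q]` survives and copies component `c (q + 1)` of the argument selected by `ρ[q]`.
Induction down the path therefore carries `s[m]` up to `t[n]`, and the only alteration is the
single `+ 1` of the innermost assignment. -/

open FirstOrder Language

attribute [local instance] Classical.propDecidable

section

variable {L : Language} {α : Type*} {ρ : List (PathEntry L)} {c : ℕ → ℕ} {tweak : Bool}

theorem funMap_pathAlg_apply (hinj : Set.InjOn c (Set.Iio ρ.length)) {q : ℕ}
    (hq : q < ρ.length) {k : ℕ} {f : L.Functions k} {i : Fin k} (hρq : ρ[q] = ⟨k, f, i⟩)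
    (xs : Fin k → ℕ → ZMod 2) :
    (pathAlg L ρ c tweak).funMap f xs (c q) =
      xs i (c (q + 1)) + if tweak ∧ q = ρ.length - 1 then 1 else 0 := by
  show (∑ p ∈ Finset.range ρ.length, _) = _
  rw [Finset.sum_eq_single_of_mem q (Finset.mem_range.mpr hq)]
  · have hget : ρ.get ⟨q, hq⟩ = ⟨k, f, i⟩ := hρq
    rw [dif_pos hq, hget]
    simp
  · intro p hp hpq
    have hcpq : c q ≠ c p := fun h ↦ hpq (hinj hq (Finset.mem_range.mp hp) h).symm
    simp [Finset.mem_range.mp hp, hcpq]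

/-- The path lemma and its tweaked version at once, for the suffix `ρ.drop q` of the path. -/
theorem realize_pathAlg_of_atPath (hinj : Set.InjOn c (Set.Iio ρ.length)) (v : α → ℕ → ZMod 2)
    {σ : List (PathEntry L)} {t s : L.Term α} (h : AtPath σ t s) {q : ℕ}
    (hσ : ρ.drop q = σ) (hq : q ≤ ρ.length) :
    letI := pathAlg L ρ c tweak
    t.realize v (c q) = s.realize v (c ρ.length) + if tweak ∧ q < ρ.length then 1 else 0 := by
  induction h generalizing q with
  | nil =>
    obtain rfl : q = ρ.length := le_antisymm hq (List.drop_eq_nil_iff.mp hσ)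
    simp
  | @cons k f ts i ρ' u _ ih =>
    have hq : q < ρ.length := by
      by_contra! hle
      simp [List.drop_eq_nil_iff.mpr hle] at hσ
    rw [List.drop_eq_getElem_cons hq, List.cons.injEq] at hσ
    let _ := pathAlg L ρ c tweak
    rw [Term.realize_func, funMap_pathAlg_apply hinj hq hσ.1, ih hσ.2 hq]
    cases tweak
    · simp
    · simp only [true_and, if_pos hq]
      split_ifs <;> first | omega | ring

end

/-- Tweaked path lemma: if `ρ` is a nonempty path with duplicate-free index chain `c`
(`c 0 = n`, `c ρ.length = m`, all indices distinct except possibly `m = n`), and `s` is a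
subterm of `t` at path `ρ`, then in the tweaked algebra `Alg(‖m,ρ,n‖')` we have
`t[n] = s[m] + 1` (mod 2) for every valuation; in particular `t[n] ≠ s[m]` always. -/
theorem tweaked_path_lemma {L : Language} {α : Type*} (m n : ℕ) (ρ : List (PathEntry L))
    (hρ : ρ ≠ []) (c : ℕ → ℕ) (hc0 : c 0 = n) (hcl : c ρ.length = m)
    (hdup : ∀ a b, a ≤ ρ.length → b ≤ ρ.length → c a = c b →
      a = b ∨ (a = 0 ∧ b = ρ.length) ∨ (a = ρ.length ∧ b = 0))
    (t s : L.Term α) (hpath : AtPath ρ t s) (v : α → ℕ → ZMod 2) :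
    let _i : L.Structure (ℕ → ZMod 2) := pathAlg L ρ c true
    Term.realize v t n = Term.realize v s m + 1 ∧
      Term.realize v t n ≠ Term.realize v s m := by
  intro _i
  have hinj : Set.InjOn c (Set.Iio ρ.length) := fun a ha b hb hab ↦ by
    simp only [Set.mem_Iio] at ha hb
    rcases hdup a b ha.le hb.le hab with h | h | h <;> omega
  have key := realize_pathAlg_of_atPath (tweak := true) hinj v hpath List.drop_zero
    (Nat.zero_le _)
  simp only [hc0, hcl, List.length_pos_iff.mpr hρ, and_self, if_true] at key
  exact ⟨key, key ▸ add_ne_left.mpr one_ne_zero⟩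
end

section
/- If s is a proper subterm of t (both terms over a given signature), then s and t are separated in a finite algebra: there is a finite algebra A such that s(a₁,…,aₖ) ≠ t(a₁,…,aₖ) for all a₁,…,aₖ ∈ A. -/
open FirstOrder Language

/-- `u` is an immediate argument (immediate subterm) of `v`. -/
def ImmediateSubterm {L : Language} {α : Type*} (u v : L.Term α) : Prop :=
  ∃ (n : ℕ) (f : L.Functions n) (ts : Fin n → L.Term α) (i : Fin n),
    v = Term.func f ts ∧ u = ts i

/-- `u` is a proper subterm of `v`: the transitive closure of `ImmediateSubterm`. -/
def ProperSubterm {L : Language} {α : Type*} (u v : L.Term α) : Prop :=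
  Relation.TransGen ImmediateSubterm u v

namespace SepAux

variable {L : Language} {α : Type*}

/-- A step of a path: an arity, a function symbol, its arguments, and a chosen index. -/
abbrev Step (L : Language) (α : Type*) := Σ n : ℕ, L.Functions n × (Fin n → L.Term α) × Fin n

/-- `ChainTo s l u` : following the list of steps `l` from `u` downward reaches `s`. -/
def ChainTo (s : L.Term α) : List (Step L α) → L.Term α → Prop
  | [], u => u = s
  | σ :: l, u => u = Term.func σ.2.1 σ.2.2.1 ∧ ChainTo s l (σ.2.2.1 σ.2.2.2)

lemma chain_of_proper {s t : L.Term α} (h : ProperSubterm s t) :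
    ∃ l : List (Step L α), l ≠ [] ∧ ChainTo s l t := by
  induction h with
  | single h =>
      obtain ⟨n, f, ts, i, rfl, rfl⟩ := h
      exact ⟨[⟨n, f, ts, i⟩], by simp, rfl, rfl⟩
  | tail _ h ih =>
      obtain ⟨l, _, hl⟩ := ih
      obtain ⟨n, f, ts, i, rfl, hb⟩ := h
      refine ⟨⟨n, f, ts, i⟩ :: l, by simp, rfl, ?_⟩
      show ChainTo s l (ts i)
      rw [← hb]; exact hl

open Classical in
/-- The finite algebra on `ℤ₂`-vectors indexed by positions of the path `l`. -/
noncomputable def pathStructure (l : List (Step L α)) :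
    L.Structure (Fin l.length → ZMod 2) where
  funMap {n} g x := fun k =>
    if h : (⟨n, g⟩ : Σ m, L.Functions m) = ⟨(l.get k).1, (l.get k).2.1⟩ then
      x (Fin.cast (congrArg Sigma.fst h).symm (l.get k).2.2.2)
          ⟨(k.1 + 1) % l.length, Nat.mod_lt _ k.pos⟩
        + (if k.1 + 1 = l.length then 1 else 0)
    else 0
  RelMap := fun _ _ => False

open Classical in
lemma pathStructure_funMap (l : List (Step L α)) {n : ℕ} (g : L.Functions n)
    (x : Fin n → (Fin l.length → ZMod 2)) (k : Fin l.length) :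
    (pathStructure l).funMap g x k =
      if h : (⟨n, g⟩ : Σ m, L.Functions m) = ⟨(l.get k).1, (l.get k).2.1⟩ then
        x (Fin.cast (congrArg Sigma.fst h).symm (l.get k).2.2.2)
            ⟨(k.1 + 1) % l.length, Nat.mod_lt _ k.pos⟩
          + (if k.1 + 1 = l.length then 1 else 0)
      else 0 := rfl

lemma realize_chain (l : List (Step L α)) (hl : l ≠ []) (s : L.Term α)
    (v : α → Fin l.length → ZMod 2) :
    letI := pathStructure l
    ∀ (m k : ℕ) (hk : k < l.length) (_hm : l.length - k = m) (u : L.Term α),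
      ChainTo s (l.drop k) u →
      Term.realize v u ⟨k, hk⟩ =
        Term.realize v s ⟨0, List.length_pos_iff.mpr hl⟩ + 1 := by
  letI := pathStructure l
  intro m
  induction m with
  | zero => intro k hk hm; omega
  | succ m ih =>
      intro k hk _hm u hu
      rw [List.drop_eq_getElem_cons hk] at hu
      obtain ⟨rfl, hrest⟩ := hu
      rw [Term.realize_func]
      rw [show (Structure.funMap (M := Fin l.length → ZMod 2) l[k].2.1
            (fun i => Term.realize v (l[k].2.2.1 i)) ⟨k, hk⟩)
          = _ from pathStructure_funMap l _ _ _]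
      split
      case isFalse h => exact absurd rfl h
      case isTrue h =>
        have hcast : (Fin.cast (congrArg Sigma.fst h).symm (l.get ⟨k, hk⟩).2.2.2)
            = l[k].2.2.2 := rfl
        simp only [hcast]
        by_cases hlast : k + 1 = l.length
        · -- last step: the argument is `s`, coordinate wraps to 0 and we add 1
          rw [List.drop_eq_nil_of_le (le_of_eq hlast.symm)] at hrest
          have hrest' : (l[k].2.2.1 l[k].2.2.2) = s := hrest
          rw [if_pos hlast, hrest']
          congr 2
          simp [hlast, Nat.mod_self]
        · -- intermediate step
          rw [if_neg hlast]
          have hk1 : k + 1 < l.length := lt_of_le_of_ne hk hlast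
          have hrec := ih (k + 1) hk1 (by omega) (l[k].2.2.1 l[k].2.2.2) hrest
          have hfin : (⟨(k + 1) % l.length, Nat.mod_lt _ (Fin.pos ⟨k, hk⟩)⟩ : Fin l.length)
              = ⟨k + 1, hk1⟩ := by
            ext; exact Nat.mod_eq_of_lt hk1
          rw [hfin, hrec, add_zero]

end SepAux

open SepAux in
/-- If s is a proper subterm of t, then s and t are separated in a finite algebra: there is a
finite (nonempty) algebra A such that the term functions of s and t never agree on A. -/
theorem separated_in_finite_of_properSubterm {L : Language} {α : Type*} (s t : L.Term α)
    (h : ProperSubterm s t) :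
    ∃ (A : Type) (_ : Fintype A) (_ : L.Structure A) (_ : Nonempty A),
      ∀ v : α → A, s.realize v ≠ t.realize v := by
  obtain ⟨l, hl, hc⟩ := chain_of_proper h
  have h0 : 0 < l.length := List.length_pos_iff.mpr hl
  refine ⟨Fin l.length → ZMod 2, inferInstance, pathStructure l, inferInstance, ?_⟩
  intro v heq
  have key := realize_chain l hl s v l.length 0 h0 (by omega) t (by simpa using hc)
  rw [← heq] at key
  have h1 : (1 : ZMod 2) = 0 := (left_eq_add.mp key)
  revert h1; decide
end

section
/- If t is a variable x, s is any term in which x occurs, and s ≠ x, then s and t = x are separated in a finite algebra. -/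
open FirstOrder Language

/-- `u` is a subterm of `v`: the reflexive-transitive closure of `ImmediateSubterm`. -/
def Subterm {L : Language} {α : Type*} (u v : L.Term α) : Prop :=
  Relation.ReflTransGen ImmediateSubterm u v

/-- A single step of a path: a function application together with a chosen argument
position. -/
structure PStep (L : Language) (α : Type*) where
  n : ℕ
  f : L.Functions n
  ts : Fin n → L.Term α
  i : Fin n

namespace PStep

/-- The term built by the step. -/
def node {L : Language} {α : Type*} (σ : PStep L α) : L.Term α := Term.func σ.f σ.ts

/-- The distinguished argument of the step. -/
def arg {L : Language} {α : Type*} (σ : PStep L α) : L.Term α := σ.ts σ.i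

end PStep

/-- Any subterm relation can be realized by an explicit chain of steps. -/
private lemma exists_chain {L : Language} {α : Type*} {u s : L.Term α} (h : Subterm u s) :
    u = s ∨ ∃ (d : ℕ) (p : ℕ → PStep L α), 0 < d ∧ (p 0).arg = u ∧
      (∀ j, j + 1 < d → (p (j+1)).arg = (p j).node) ∧ (p (d-1)).node = s := by
  have h' : Relation.ReflTransGen ImmediateSubterm u s := h
  induction h' using Relation.ReflTransGen.head_induction_on with
  | refl => exact Or.inl rfl
  | head hac hcb ih =>
    rename_i a c
    obtain ⟨n, f, ts, i, hc, hu⟩ := hac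
    rcases ih hcb with rfl | ⟨d, p, hd, h0, hstep, htop⟩
    · refine Or.inr ⟨1, fun _ => ⟨n, f, ts, i⟩, one_pos, hu.symm, ?_, hc.symm⟩
      intro j hj; omega
    · refine Or.inr ⟨d + 1, fun j => if j = 0 then ⟨n, f, ts, i⟩ else p (j - 1), by omega,
        ?_, ?_, ?_⟩
      · simpa [PStep.arg] using hu.symm
      · intro j hj
        rcases Nat.eq_zero_or_pos j with rfl | hjpos
        · simpa [PStep.node, PStep.arg] using h0.trans hc
        · have hj0 : j ≠ 0 := by omega
          have hj1 : j + 1 ≠ 0 := by omega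
          simp only [hj0, hj1, if_neg, ite_false]
          have : j + 1 - 1 = (j - 1) + 1 := by omega
          rw [this]
          have hlt : (j - 1) + 1 < d := by omega
          have := hstep (j - 1) hlt
          simpa [show (j-1) + 1 - 1 = j - 1 by omega] using this
      · have hne : d + 1 - 1 ≠ 0 := by omega
        simp only [hne, ite_false, if_neg]
        simpa [show d + 1 - 1 - 1 = d - 1 by omega] using htop

private lemma mod_key {d j : ℕ} (hd : 0 < d) (hj : j < d) :
    ((j+1) % d + (d-1)) % d = j := by
  rcases Nat.lt_or_ge (j+1) d with h1 | h1
  · rw [Nat.mod_eq_of_lt h1, show j + 1 + (d-1) = j + d by omega, Nat.add_mod_right,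
      Nat.mod_eq_of_lt hj]
  · have hjd : j + 1 = d := by omega
    rw [hjd, Nat.mod_self, Nat.zero_add, Nat.mod_eq_of_lt (by omega)]
    omega

/-- The separating structure built from a sequence of positions `q` and a length `d`:
carrier `Fin d → ZMod (d+1)`; every function symbol writes, into slot `t`, the value of
slot `J := (t + d - 1) % d` of its argument at position `q J`, plus 1. -/
def pathStructure (L : Language) (d : ℕ) (hd : 0 < d) (q : ℕ → ℕ) :
    L.Structure (Fin d → ZMod (d+1)) where
  funMap {n} _ a := fun t =>
    if h : 0 < n then
      a ⟨q ((t.val + (d-1)) % d) % n, Nat.mod_lt _ h⟩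
        ⟨(t.val + (d-1)) % d, Nat.mod_lt _ hd⟩ + 1
    else 0
  RelMap _ _ := False

lemma pathStructure_funMap_eval {L : Language} (d : ℕ) (hd : 0 < d)
    (q : ℕ → ℕ) {n : ℕ} (hn : 0 < n) (g : L.Functions n)
    (a : Fin n → (Fin d → ZMod (d+1))) (j : ℕ) (hj : j < d) :
    @Structure.funMap L (Fin d → ZMod (d+1)) (pathStructure L d hd q) n g a
        ⟨(j+1) % d, Nat.mod_lt _ hd⟩
      = a ⟨q j % n, Nat.mod_lt _ hn⟩ ⟨j, hj⟩ + 1 := by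
  show (if h : 0 < n then
      a ⟨q (((j+1) % d + (d-1)) % d) % n, Nat.mod_lt _ h⟩
        ⟨((j+1) % d + (d-1)) % d, Nat.mod_lt _ hd⟩ + 1
    else 0) = _
  rw [dif_pos hn]
  simp only [mod_key hd hj]

/-- If t is a variable x, s is any term in which x occurs, and s ≠ x, then s and t = x are
separated in a finite algebra. -/
theorem separated_in_finite_of_var_occurs {L : Language} {α : Type*} (x : α) (s : L.Term α)
    (hocc : Subterm (Term.var x) s) (hne : s ≠ Term.var x) :
    ∃ (A : Type) (_ : Fintype A) (_ : L.Structure A) (_ : Nonempty A),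
      ∀ v : α → A, s.realize v ≠ (Term.var x : L.Term α).realize v := by
  classical
  rcases exists_chain hocc with heq | ⟨d, p, hd, h0, hstep, htop⟩
  · exact absurd heq.symm hne
  letI SI : L.Structure (Fin d → ZMod (d+1)) :=
    pathStructure L d hd (fun m => ((p m).i : ℕ))
  refine ⟨Fin d → ZMod (d+1), inferInstance, SI, inferInstance, ?_⟩
  have inv : ∀ (v : α → Fin d → ZMod (d+1)) (j : ℕ) (hj : j < d),
      @Term.realize L _ SI α v (p j).node ⟨(j+1) % d, Nat.mod_lt _ hd⟩
        = v x ⟨0, hd⟩ + ((j+1 : ℕ) : ZMod (d+1)) := by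
    intro v j
    induction j with
    | zero =>
      intro hj
      have hpos : 0 < (p 0).n := (p 0).i.pos
      simp only [PStep.node, Term.realize_func]
      rw [pathStructure_funMap_eval d hd _ hpos _ _ 0 hj]
      simp only [Nat.mod_eq_of_lt ((p 0).i.isLt), Fin.eta]
      rw [show (p 0).ts ((p 0).i) = Term.var x from h0]
      show v x ⟨0, hj⟩ + 1 = v x ⟨0, hd⟩ + ((0 + 1 : ℕ) : ZMod (d+1))
      norm_num
    | succ k ih =>
      intro hj
      have hk : k < d := by omega
      have hpos : 0 < (p (k+1)).n := (p (k+1)).i.pos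
      simp only [PStep.node, Term.realize_func]
      rw [pathStructure_funMap_eval d hd _ hpos _ _ (k+1) hj]
      simp only [Nat.mod_eq_of_lt ((p (k+1)).i.isLt), Fin.eta]
      rw [show (p (k+1)).ts ((p (k+1)).i) = (p k).node from hstep k hj]
      have hmod : (k+1) % d = k + 1 := Nat.mod_eq_of_lt hj
      have hIH := ih hk
      rw [show (⟨(k+1) % d, Nat.mod_lt _ hd⟩ : Fin d) = ⟨k+1, hj⟩ from Fin.ext hmod] at hIH
      rw [show (⟨k+1, hj⟩ : Fin d) = ⟨k+1, hj⟩ from rfl, hIH]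
      push_cast
      ring
  intro v hv
  have hfin := inv v (d-1) (by omega)
  rw [show (p (d-1)).node = s from htop] at hfin
  have hslot : ((d - 1 + 1) % d) = 0 := by
    rw [show d - 1 + 1 = d by omega, Nat.mod_self]
  rw [show (⟨(d-1+1) % d, Nat.mod_lt _ hd⟩ : Fin d) = ⟨0, hd⟩ from Fin.ext hslot] at hfin
  have hvx : (Term.var x : L.Term α).realize v = v x := rfl
  rw [hv, hvx] at hfin
  have hd0 : ((d - 1 + 1 : ℕ) : ZMod (d+1)) = 0 := by
    exact (add_eq_left.mp hfin.symm)
  rw [show (d - 1 + 1) = d by omega] at hd0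
  have hdvd : (d + 1) ∣ d := (ZMod.natCast_eq_zero_iff d (d+1)).mp hd0
  have := Nat.le_of_dvd hd hdvd
  omega
end

section
/- Terms s and t are unifiable if and only if they are NOT separated in any algebra; equivalently, s and t cannot be unified iff there exists a finite algebra separating them. -/
/-!
If `s` and `t` are not unifiable, the Martelli–Montanari algorithm run on `s ≐ t` ends in a
symbol clash or an occurs check. Reading the run backwards we build an affine algebra on `ℤ^ι`,
`f(v₁, …, vₙ) = c_f + ∑ᵢ M_{f,i} vᵢ`, and integer row vectors weighting the equations of the
current system, such that the weighted sum of the defects `sⱼ(a) - tⱼ(a)` is a nonzero constant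
`C` for every assignment `a`. A clash is refuted by constants; an occurs check `x ≐ u` by a cyclic
automaton that walks the path from the root of `u` to `x`, so that `u(a) - x(a)` is the path
length in coordinate `0`. Variable elimination works because terms are affine in each variable,
and decomposition adds one coordinate recording weighted arguments. Reducing modulo
`m = |C| + 1` gives the finite algebra `(ZMod m)^ι`: at a solution of `s ≐ t` the weighted defect
would vanish, but `C` does not vanish modulo `m`.
-/

open FirstOrder Language

namespace FirstOrder.Language

variable {L : Language} {α : Type*}

namespace Term

theorem subst_subst {β γ : Type*} (t : L.Term α) (σ : α → L.Term β) (τ : β → L.Term γ) :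
    (t.subst σ).subst τ = t.subst fun x => (σ x).subst τ := by
  induction t with
  | var => rfl
  | func f ts ih => simp only [subst, ih]

theorem subst_eq_self [DecidableEq α] {t : L.Term α} {σ : α → L.Term α}
    (h : ∀ x ∈ t.varFinset, σ x = var x) : t.subst σ = t := by
  induction t with
  | var x => exact h x (Finset.mem_singleton_self x)
  | func f ts ih =>
    simp only [varFinset, Finset.mem_biUnion, Finset.mem_univ, true_and] at h
    simp only [subst, func.injEq, heq_eq_eq, true_and]
    exact funext fun i => ih i fun x hx => h x ⟨i, hx⟩

theorem varFinset_subst {β : Type*} [DecidableEq α] [DecidableEq β] (t : L.Term α)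
    (σ : α → L.Term β) : (t.subst σ).varFinset = t.varFinset.biUnion fun x => (σ x).varFinset := by
  induction t with
  | var => simp [subst, varFinset]
  | func f ts ih => simp only [subst, varFinset, ih, Finset.biUnion_biUnion]

theorem varFinset_subst_update_subset [DecidableEq α] {x : α} {u : L.Term α}
    (hx : x ∉ u.varFinset) (t : L.Term α) :
    (t.subst (Function.update var x u)).varFinset ⊆ (t.varFinset ∪ u.varFinset).erase x := by
  intro y hy
  rw [varFinset_subst, Finset.mem_biUnion] at hy
  obtain ⟨z, hz, hyz⟩ := hy
  rcases eq_or_ne z x with rfl | hzx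
  · rw [Function.update_self] at hyz
    exact Finset.mem_erase.mpr ⟨ne_of_mem_of_not_mem hyz hx, Finset.mem_union_right _ hyz⟩
  · rw [Function.update_of_ne hzx, varFinset, Finset.mem_singleton] at hyz
    subst hyz
    exact Finset.mem_erase.mpr ⟨hzx, Finset.mem_union_left _ hz⟩

def size : L.Term α → ℕ
  | var _ => 1
  | func _ ts => ∑ i, (ts i).size + 1

theorem size_pos (t : L.Term α) : 0 < t.size := by
  cases t <;> simp [size]

inductive IsPath : L.Term α → List (Σ n, L.Functions n × Fin n) → α → Prop
  | var (x : α) : IsPath (var x) [] x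
  | func {n : ℕ} (f : L.Functions n) (ts : Fin n → L.Term α) (i : Fin n) {p : List _} {x : α} :
      IsPath (ts i) p x → IsPath (func f ts) (⟨n, f, i⟩ :: p) x

theorem exists_isPath [DecidableEq α] {t : L.Term α} {x : α} (h : x ∈ t.varFinset) :
    ∃ p, t.IsPath p x := by
  induction t with
  | var y =>
    obtain rfl := Finset.mem_singleton.mp h
    exact ⟨[], .var _⟩
  | func f ts ih =>
    simp only [varFinset, Finset.mem_biUnion, Finset.mem_univ, true_and] at h
    obtain ⟨i, hi⟩ := h
    obtain ⟨p, hp⟩ := ih i hi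
    exact ⟨_, .func f ts i hp⟩

end Term

open Term

abbrev Equations (L : Language) (α : Type*) := List (L.Term α × L.Term α)

namespace Equations

def subst {β : Type*} (σ : α → L.Term β) (E : L.Equations α) : L.Equations β :=
  E.map fun p => (p.1.subst σ, p.2.subst σ)

def IsUnifiable (E : L.Equations α) : Prop :=
  ∃ σ : α → L.Term α, ∀ p ∈ E, p.1.subst σ = p.2.subst σ

theorem isUnifiable_nil : IsUnifiable ([] : L.Equations α) :=
  ⟨var, by simp⟩

variable {E : L.Equations α} {s t u : L.Term α}

theorem IsUnifiable.cons_self (h : IsUnifiable E) : IsUnifiable ((t, t) :: E) := by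
  obtain ⟨σ, hσ⟩ := h
  exact ⟨σ, by simpa using hσ⟩

theorem IsUnifiable.swap_head (h : IsUnifiable ((t, s) :: E)) : IsUnifiable ((s, t) :: E) := by
  obtain ⟨σ, hσ⟩ := h
  simp only [List.forall_mem_cons] at hσ
  exact ⟨σ, List.forall_mem_cons.mpr ⟨hσ.1.symm, hσ.2⟩⟩

theorem IsUnifiable.cons_var_of_subst [DecidableEq α] {x : α} (hx : x ∉ u.varFinset)
    (h : IsUnifiable (E.subst (Function.update var x u))) : IsUnifiable ((var x, u) :: E) := by
  obtain ⟨σ, hσ⟩ := h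
  have hu : u.subst (Function.update var x u) = u :=
    subst_eq_self fun y hy => Function.update_of_ne (ne_of_mem_of_not_mem hy hx) _ _
  refine ⟨fun y => (Function.update var x u y).subst σ, List.forall_mem_cons.mpr ⟨?_, ?_⟩⟩
  · simp only
    rw [← subst_subst u, hu]
    simp [Term.subst]
  · intro p hp
    rw [← subst_subst, ← subst_subst]
    exact hσ _ (List.mem_map_of_mem hp)

theorem IsUnifiable.cons_func_of_args {n : ℕ} {f : L.Functions n} {ts us : Fin n → L.Term α}
    (h : IsUnifiable (List.ofFn (fun i => (ts i, us i)) ++ E)) :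
    IsUnifiable ((func f ts, func f us) :: E) := by
  obtain ⟨σ, hσ⟩ := h
  simp only [List.forall_mem_append, List.forall_mem_ofFn_iff] at hσ
  refine ⟨σ, List.forall_mem_cons.mpr ⟨?_, hσ.2⟩⟩
  simp only [Term.subst, func.injEq, heq_eq_eq, true_and]
  exact funext hσ.1

section Rank

variable [DecidableEq α]

def vars : L.Equations α → Finset α
  | [] => ∅
  | p :: E => p.1.varFinset ∪ p.2.varFinset ∪ vars E

theorem mem_vars {x : α} : x ∈ vars E ↔ ∃ p ∈ E, x ∈ p.1.varFinset ∨ x ∈ p.2.varFinset := by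
  induction E with
  | nil => simp [vars]
  | cons p E ih => simp [vars, ih, or_assoc]

def size (E : L.Equations α) : ℕ :=
  (E.map fun p => p.1.size + p.2.size).sum

def rank (E : L.Equations α) : ℕ ×ₗ ℕ :=
  toLex ((vars E).card, size E)

theorem rank_lt_of_ssubset {E' : L.Equations α} (h : vars E' ⊂ vars E) : rank E' < rank E :=
  Prod.Lex.toLex_lt_toLex.mpr (Or.inl (Finset.card_lt_card h))

theorem rank_lt_of_subset_of_size_lt {E' : L.Equations α} (hv : vars E' ⊆ vars E)
    (hs : size E' < size E) : rank E' < rank E :=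
  Prod.Lex.toLex_lt_toLex.mpr ((Finset.card_le_card hv).lt_or_eq.imp_right (⟨·, hs⟩))

theorem rank_swap_head : rank ((t, s) :: E) = rank ((s, t) :: E) := by
  simp only [rank, vars, size, List.map_cons, List.sum_cons, Finset.union_comm t.varFinset,
    Nat.add_comm t.size]

theorem rank_lt_cons_self : rank E < rank ((t, t) :: E) :=
  rank_lt_of_subset_of_size_lt Finset.subset_union_right
    (by simp only [size, List.map_cons, List.sum_cons]; have := t.size_pos; omega)

theorem vars_subst_update_subset {x : α} (hx : x ∉ u.varFinset) :
    vars (E.subst (Function.update var x u)) ⊆ (vars ((var x, u) :: E)).erase x := by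
  intro y hy
  obtain ⟨_, hq, hy⟩ := mem_vars.mp hy
  obtain ⟨p, hp, rfl⟩ := List.mem_map.mp hq
  replace hy :=
    hy.imp (varFinset_subst_update_subset hx p.1 ·) (varFinset_subst_update_subset hx p.2 ·)
  simp only [Finset.mem_erase, Finset.mem_union, mem_vars, List.mem_cons] at hy ⊢
  refine ⟨hy.elim (·.1) (·.1), ?_⟩
  rcases hy with ⟨-, hy | hy⟩ | ⟨-, hy | hy⟩
  exacts [⟨p, .inr hp, .inl hy⟩, ⟨_, .inl rfl, .inr hy⟩, ⟨p, .inr hp, .inr hy⟩,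
    ⟨_, .inl rfl, .inr hy⟩]

theorem rank_subst_update_lt {x : α} (hx : x ∉ u.varFinset) :
    rank (E.subst (Function.update var x u)) < rank ((var x, u) :: E) :=
  rank_lt_of_ssubset ((vars_subst_update_subset hx).trans_ssubset
    (Finset.erase_ssubset (by simp [vars, varFinset])))

theorem rank_args_lt {n : ℕ} {f : L.Functions n} {ts us : Fin n → L.Term α} :
    rank (List.ofFn (fun i => (ts i, us i)) ++ E) < rank ((func f ts, func f us) :: E) := by
  refine rank_lt_of_subset_of_size_lt (fun x hx => ?_) ?_
  · simp only [mem_vars, List.mem_append, List.mem_ofFn, List.mem_cons] at hx ⊢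
    obtain ⟨p, ⟨i, rfl⟩ | hp, hx⟩ := hx
    · refine ⟨_, .inl rfl, hx.imp ?_ ?_⟩ <;>
        exact fun h => Finset.mem_biUnion.mpr ⟨i, Finset.mem_univ i, h⟩
    · exact ⟨p, .inr hp, hx⟩
  · simp only [size, List.map_append, List.sum_append, List.map_ofFn, List.sum_ofFn, List.map_cons,
      List.sum_cons, Term.size, Function.comp_def, Finset.sum_add_distrib]
    omega

end Rank

end Equations

structure AffineInterp (L : Language) (ι R : Type*) where
  lin : ∀ {n}, L.Functions n → Fin n → Matrix ι ι R
  const : ∀ {n}, L.Functions n → ι → R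

namespace AffineInterp

open Matrix

variable {ι R S : Type*} [Fintype ι] [Ring R] [Ring S] (I : AffineInterp L ι R)

abbrev toStructure : L.Structure (ι → R) where
  funMap f v := I.const f + ∑ i, I.lin f i *ᵥ v i
  RelMap _ _ := False

def eval (a : α → ι → R) (t : L.Term α) : ι → R :=
  @Term.realize L _ I.toStructure α a t

@[simp] theorem eval_var (a : α → ι → R) (x : α) : I.eval a (var x) = a x := rfl

theorem eval_func (a : α → ι → R) {n : ℕ} (f : L.Functions n) (ts : Fin n → L.Term α) :
    I.eval a (func f ts) = I.const f + ∑ i, I.lin f i *ᵥ I.eval a (ts i) := rfl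

theorem eval_subst {β : Type*} (a : β → ι → R) (σ : α → L.Term β) (t : L.Term α) :
    I.eval a (t.subst σ) = I.eval (fun x => I.eval a (σ x)) t :=
  @Term.realize_subst L _ I.toStructure α β t σ a

theorem eval_update_var [DecidableEq α] (a : α → ι → R) (x : α) (u : L.Term α) :
    (fun y => I.eval a (Function.update var x u y)) = Function.update a x (I.eval a u) := by
  funext y
  rcases eq_or_ne y x with rfl | h <;> simp [Function.update_of_ne, *]

theorem exists_eval_update [DecidableEq α] (x : α) (t : L.Term α) :
    ∃ K : Matrix ι ι R, ∀ a b, I.eval (Function.update a x b) t = I.eval a t + K *ᵥ (b - a x) := by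
  classical
  induction t with
  | var y =>
    rcases eq_or_ne y x with rfl | h
    · exact ⟨1, fun a b => by simp⟩
    · exact ⟨0, fun a b => by simp [h]⟩
  | func f ts ih =>
    choose K hK using ih
    refine ⟨∑ i, I.lin f i * K i, fun a b => ?_⟩
    simp only [eval_func, hK, mulVec_add, mulVec_mulVec, Finset.sum_add_distrib, sum_mulVec]
    abel

def map (φ : R →+* S) : AffineInterp L ι S where
  lin f i := (I.lin f i).map φ
  const f := φ ∘ I.const f

theorem eval_map (φ : R →+* S) (a : α → ι → R) (t : L.Term α) :
    (I.map φ).eval (fun x => φ ∘ a x) t = φ ∘ I.eval a t := by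
  induction t with
  | var => rfl
  | func f ts ih =>
    funext d
    simp only [eval_func, ih]
    simp [map, RingHom.map_mulVec, map_sum]

def defect (a : α → ι → R) (p : L.Term α × L.Term α) : ι → R :=
  I.eval a p.1 - I.eval a p.2

def weightedDefect (q : Stream' (ι → R)) : L.Equations α → (α → ι → R) → R
  | [], _ => 0
  | p :: E, a => q.head ⬝ᵥ I.defect a p + weightedDefect q.tail E a

variable {I}

@[simp] theorem weightedDefect_nil (q : Stream' (ι → R)) (a : α → ι → R) :
    I.weightedDefect q [] a = 0 := rfl

@[simp] theorem weightedDefect_cons (q : Stream' (ι → R)) (p : L.Term α × L.Term α)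
    (E : L.Equations α) (a : α → ι → R) :
    I.weightedDefect q (p :: E) a = q.head ⬝ᵥ I.defect a p + I.weightedDefect q.tail E a := rfl

theorem weightedDefect_const_zero (E : L.Equations α) (a : α → ι → R) :
    I.weightedDefect (Stream'.const 0) E a = 0 := by
  induction E with
  | nil => rfl
  | cons p E ih => simp [Stream'.head, Stream'.tail_const, ih]

theorem weightedDefect_append (q : Stream' (ι → R)) (E₁ E₂ : L.Equations α) (a : α → ι → R) :
    I.weightedDefect q (E₁ ++ E₂) a =
      I.weightedDefect q E₁ a + I.weightedDefect (q.drop E₁.length) E₂ a := by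
  induction E₁ generalizing q with
  | nil => simp
  | cons p E ih =>
    simp only [List.cons_append, weightedDefect_cons, List.length_cons, ih, Stream'.drop_succ,
      add_assoc]

theorem weightedDefect_ofFn {n : ℕ} (q : Stream' (ι → R)) (g : Fin n → L.Term α × L.Term α)
    (a : α → ι → R) :
    I.weightedDefect q (List.ofFn g) a = ∑ i : Fin n, q.get i ⬝ᵥ I.defect a (g i) := by
  induction n generalizing q with
  | zero => simp
  | succ n ih =>
    simp only [List.ofFn_succ, weightedDefect_cons, ih, Fin.sum_univ_succ, Fin.val_succ,
      Stream'.get_succ]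
    rfl

theorem weightedDefect_subst {β : Type*} (q : Stream' (ι → R)) (σ : α → L.Term β)
    (E : L.Equations α) (a : β → ι → R) :
    I.weightedDefect q (E.subst σ) a = I.weightedDefect q E (fun x => I.eval a (σ x)) := by
  induction E generalizing q with
  | nil => rfl
  | cons p E ih =>
    simp only [Equations.subst, List.map_cons] at ih ⊢
    simp [ih, defect, eval_subst]

theorem exists_weightedDefect_update [DecidableEq α] (x : α) (q : Stream' (ι → R))
    (E : L.Equations α) : ∃ w : ι → R, ∀ a b,
      I.weightedDefect q E (Function.update a x b) = I.weightedDefect q E a + w ⬝ᵥ (b - a x) := by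
  induction E generalizing q with
  | nil => exact ⟨0, fun a b => by simp⟩
  | cons p E ih =>
    obtain ⟨K₁, hK₁⟩ := I.exists_eval_update x p.1
    obtain ⟨K₂, hK₂⟩ := I.exists_eval_update x p.2
    obtain ⟨w, hw⟩ := ih q.tail
    refine ⟨q.head ᵥ* (K₁ - K₂) + w, fun a b => ?_⟩
    simp only [weightedDefect_cons, defect, hK₁, hK₂, hw, add_dotProduct, ← dotProduct_mulVec,
      sub_mulVec, mulVec_sub, dotProduct_sub, dotProduct_add]
    abel

section Cyclic

variable {N : ℕ} [NeZero N] (e : ZMod N → Σ n, L.Functions n × Fin n)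

open Classical in
/-- State `d` lets only the argument named by the edge `e d` through, moving to state `d + 1`; every
node visited contributes `1`. -/
noncomputable def cyclic : AffineInterp L (ZMod N) R where
  lin f i := Matrix.of fun d d' => if e d = ⟨_, f, i⟩ ∧ d' = d + 1 then 1 else 0
  const _ _ := 1

theorem eval_cyclic_func {n : ℕ} {f : L.Functions n} {i : Fin n} {d : ZMod N}
    (h : e d = ⟨n, f, i⟩) (ts : Fin n → L.Term α) (a : α → ZMod N → R) :
    (cyclic e).eval a (func f ts) d = 1 + (cyclic e).eval a (ts i) (d + 1) := by
  simp [eval_func, cyclic, mulVec, dotProduct, h, ite_and, Finset.sum_ite_eq]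

theorem eval_cyclic_of_isPath {t : L.Term α} {p : List (Σ n, L.Functions n × Fin n)} {x : α}
    (hp : t.IsPath p x) (a : α → ZMod N → R) (d : ZMod N)
    (he : ∀ j : Fin p.length, p.get j = e (d + j)) :
    (cyclic e).eval a t d = a x (d + p.length) + p.length := by
  induction hp generalizing d with
  | var x => simp
  | func f ts i hp ih =>
    have hd : e d = ⟨_, f, i⟩ := by simpa using (he 0).symm
    rw [eval_cyclic_func e hd,
      ih (d + 1) fun j => by simpa [add_assoc, add_comm (1 : ZMod N)] using he j.succ]
    simp only [List.length_cons, Nat.cast_succ, add_assoc, add_comm (1 : ZMod N)]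
    abel

end Cyclic

section Extend

/-- The new coordinate of `f(v₁, …, vₙ)` is `∑ᵢ w f i ⬝ᵥ vᵢ`, so on `f(ts) ≐ f(us)` it measures the
`w`-weighted defects of the arguments. -/
@[simps]
def extend (w : ∀ {n}, L.Functions n → Fin n → ι → R) : AffineInterp L (ι ⊕ Unit) R where
  lin f i := fromBlocks (I.lin f i) 0 (replicateRow Unit (w f i)) 0
  const f := Sum.elim (I.const f) 0

variable (w : ∀ {n}, L.Functions n → Fin n → ι → R)

theorem eval_extend_comp_inl (a : α → ι ⊕ Unit → R) (t : L.Term α) :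
    (I.extend w).eval a t ∘ Sum.inl = I.eval (fun x => a x ∘ Sum.inl) t := by
  induction t with
  | var => rfl
  | func f ts ih =>
    funext d
    simp [eval_func, fromBlocks_mulVec, ← ih]

theorem eval_extend_func_inr (a : α → ι ⊕ Unit → R) {n : ℕ} (f : L.Functions n)
    (ts : Fin n → L.Term α) :
    (I.extend w).eval a (func f ts) (Sum.inr ()) =
      ∑ i, w f i ⬝ᵥ I.eval (fun x => a x ∘ Sum.inl) (ts i) := by
  simp [eval_func, fromBlocks_mulVec, eval_extend_comp_inl, replicateRow_mulVec_eq_const]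

theorem weightedDefect_extend (q : Stream' (ι → R)) (E : L.Equations α) (a : α → ι ⊕ Unit → R) :
    (I.extend w).weightedDefect (q.map (Sum.elim · 0)) E a =
      I.weightedDefect q E (fun x => a x ∘ Sum.inl) := by
  induction E generalizing q with
  | nil => rfl
  | cons p E ih =>
    simp only [weightedDefect_cons, Stream'.head_map, Stream'.tail_map, ih, defect,
      ← eval_extend_comp_inl w]
    congr 1
    simp [dotProduct, Fintype.sum_sum_type]

end Extend

end AffineInterp

namespace Equations

open Matrix AffineInterp

def IsAffinelyRefutable (E : L.Equations α) : Prop :=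
  ∃ (ι : Type) (_ : Fintype ι) (I : AffineInterp L ι ℤ) (q : Stream' (ι → ℤ)) (C : ℤ),
    C ≠ 0 ∧ ∀ a, I.weightedDefect q E a = C

variable {E : L.Equations α} {s t u : L.Term α}

theorem IsAffinelyRefutable.cons (p : L.Term α × L.Term α) (h : IsAffinelyRefutable E) :
    IsAffinelyRefutable (p :: E) := by
  obtain ⟨ι, hι, I, q, C, hC, hq⟩ := h
  exact ⟨ι, hι, I, Stream'.cons 0 q, C, hC, fun a => by simp [Stream'.tail_cons, hq]⟩

theorem IsAffinelyRefutable.swap_head (h : IsAffinelyRefutable ((t, s) :: E)) :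
    IsAffinelyRefutable ((s, t) :: E) := by
  obtain ⟨ι, hι, I, q, C, hC, hq⟩ := h
  refine ⟨ι, hι, I, Stream'.cons (-q.head) q.tail, C, hC, fun a => ?_⟩
  rw [← hq a]
  simp only [weightedDefect_cons, Stream'.head_cons, Stream'.tail_cons, defect, neg_dotProduct,
    dotProduct_sub]
  abel

theorem IsAffinelyRefutable.cons_var_of_subst [DecidableEq α] {x : α}
    (h : IsAffinelyRefutable (E.subst (Function.update var x u))) :
    IsAffinelyRefutable ((var x, u) :: E) := by
  obtain ⟨ι, hι, I, q, C, hC, hq⟩ := h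
  obtain ⟨w, hw⟩ := I.exists_weightedDefect_update x q E
  refine ⟨ι, hι, I, Stream'.cons (-w) q, C, hC, fun a => ?_⟩
  rw [← hq a, weightedDefect_subst, eval_update_var, hw]
  simp only [weightedDefect_cons, Stream'.head_cons, Stream'.tail_cons, defect, eval_var,
    neg_dotProduct, dotProduct_sub]
  abel

theorem IsAffinelyRefutable.cons_func_of_args {n : ℕ} {f : L.Functions n}
    {ts us : Fin n → L.Term α} (h : IsAffinelyRefutable (List.ofFn (fun i => (ts i, us i)) ++ E)) :
    IsAffinelyRefutable ((func f ts, func f us) :: E) := by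
  classical
  obtain ⟨ι, hι, I, q, C, hC, hq⟩ := h
  refine ⟨ι ⊕ Unit, inferInstance, I.extend fun _ i => q.get i,
    Stream'.cons (Pi.single (Sum.inr ()) 1) ((q.drop n).map (Sum.elim · 0)), C, hC, fun a => ?_⟩
  rw [← hq (fun x => a x ∘ Sum.inl), weightedDefect_append, weightedDefect_ofFn, List.length_ofFn]
  simp [Stream'.tail_cons, defect, single_dotProduct, eval_extend_func_inr,
    weightedDefect_extend, dotProduct_sub, Finset.sum_sub_distrib]

theorem isAffinelyRefutable_clash {m n : ℕ} {f : L.Functions m} {g : L.Functions n}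
    (hfg : (⟨m, f⟩ : Σ n, L.Functions n) ≠ ⟨n, g⟩) (ts : Fin m → L.Term α)
    (us : Fin n → L.Term α) (E : L.Equations α) :
    IsAffinelyRefutable ((func f ts, func g us) :: E) := by
  classical
  let I : AffineInterp L Unit ℤ :=
    ⟨fun _ _ => 0, fun h _ => if (⟨_, h⟩ : Σ n, L.Functions n) = ⟨n, g⟩ then 1 else 0⟩
  refine ⟨Unit, inferInstance, I, Stream'.cons 1 (Stream'.const 0), -1, by norm_num, fun a => ?_⟩
  simp [I, defect, eval_func, weightedDefect_const_zero, Stream'.tail_cons]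
  exact fun h hfg' => hfg (Sigma.ext h hfg')

theorem isAffinelyRefutable_occurs [DecidableEq α] {x : α} {n : ℕ} {f : L.Functions n}
    {ts : Fin n → L.Term α} (hx : x ∈ (func f ts).varFinset) (E : L.Equations α) :
    IsAffinelyRefutable ((var x, func f ts) :: E) := by
  obtain ⟨p, hp⟩ := exists_isPath hx
  have : NeZero p.length := ⟨by cases hp; simp⟩
  let e : ZMod p.length → Σ n, L.Functions n × Fin n := fun d => p.get ⟨d.val, ZMod.val_lt d⟩
  refine ⟨ZMod p.length, inferInstance, cyclic e, Stream'.cons (Pi.single 0 1) (Stream'.const 0),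
    -p.length, by simp [NeZero.ne], fun a => ?_⟩
  have key := eval_cyclic_of_isPath e hp a 0 fun j => by
    simp [e, ZMod.val_natCast, Nat.mod_eq_of_lt j.isLt]
  simp [defect, key, weightedDefect_const_zero, single_dotProduct, Stream'.tail_cons]

theorem isUnifiable_or_isAffinelyRefutable_cons_var [DecidableEq α] {x : α} (hxu : var x ≠ u)
    (ih : ∀ E' : L.Equations α, rank E' < rank ((var x, u) :: E) →
      IsUnifiable E' ∨ IsAffinelyRefutable E') :
    IsUnifiable ((var x, u) :: E) ∨ IsAffinelyRefutable ((var x, u) :: E) := by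
  by_cases hx : x ∈ u.varFinset
  · cases u with
    | var y => exact absurd (congrArg var (Finset.mem_singleton.mp hx)) hxu
    | func f ts => exact .inr (isAffinelyRefutable_occurs hx E)
  · exact (ih _ (rank_subst_update_lt hx)).imp (·.cons_var_of_subst hx) (·.cons_var_of_subst)

theorem isUnifiable_or_isAffinelyRefutable [DecidableEq α] (E : L.Equations α) :
    IsUnifiable E ∨ IsAffinelyRefutable E := by
  refine (InvImage.wf rank wellFounded_lt).induction
    (C := fun E => IsUnifiable E ∨ IsAffinelyRefutable E) E fun E ih => ?_
  rcases E with _ | ⟨⟨s, t⟩, E⟩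
  · exact .inl isUnifiable_nil
  by_cases hst : s = t
  · subst hst
    exact (ih E rank_lt_cons_self).imp (·.cons_self) (·.cons _)
  rcases s with x | ⟨f, ts⟩
  · exact isUnifiable_or_isAffinelyRefutable_cons_var hst ih
  rcases t with x | ⟨g, us⟩
  · exact (isUnifiable_or_isAffinelyRefutable_cons_var (Ne.symm hst)
      fun E' h => ih E' (h.trans_eq rank_swap_head)).imp (·.swap_head) (·.swap_head)
  by_cases hfg : (⟨_, f⟩ : Σ n, L.Functions n) = ⟨_, g⟩
  · obtain ⟨rfl, hfg⟩ := Sigma.mk.inj_iff.mp hfg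
    obtain rfl := eq_of_heq hfg
    exact (ih _ rank_args_lt).imp (·.cons_func_of_args) (·.cons_func_of_args)
  · exact .inr (isAffinelyRefutable_clash hfg ts us E)

theorem exists_finite_separating_of_isAffinelyRefutable
    (h : IsAffinelyRefutable [(s, t)]) :
    ∃ (A : Type) (_ : Fintype A) (_ : L.Structure A) (_ : Nonempty A),
      ∀ v : α → A, s.realize v ≠ t.realize v := by
  classical
  obtain ⟨ι, hι, I, q, C, hC, hq⟩ := h
  let m := C.natAbs + 1
  let φ := Int.castRingHom (ZMod m)
  refine ⟨ι → ZMod m, inferInstance, (I.map φ).toStructure, ⟨0⟩, fun v hv => hC ?_⟩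
  obtain ⟨a, rfl⟩ := (ZMod.intCast_surjective (n := m)).comp_left.comp_left v
  have hst : φ ∘ I.eval a s = φ ∘ I.eval a t := by
    rw [← eval_map, ← eval_map]
    exact hv
  have hdefect : φ ∘ I.defect a (s, t) = 0 := by
    funext d
    simpa [defect, sub_eq_zero] using congrFun hst d
  have hCm : φ C = 0 := by
    rw [← hq a, weightedDefect_cons, weightedDefect_nil, add_zero, RingHom.map_dotProduct, hdefect,
      dotProduct_zero]
  exact Int.eq_zero_of_dvd_of_natAbs_lt_natAbs ((ZMod.intCast_zmod_eq_zero_iff_dvd C m).mp hCm)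
    (by rw [Int.natAbs_natCast]; exact Nat.lt_succ_self _)

end Equations

end FirstOrder.Language

theorem unifiable_iff_not_separated_general {L : Language} {k : ℕ} (s t : L.Term (Fin k)) :
    ((∃ (β : Type) (σ : Fin k → L.Term β), s.subst σ = t.subst σ) ↔
      ¬ ∃ (A : Type) (_ : L.Structure A) (_ : Nonempty A),
        ∀ v : Fin k → A, s.realize v ≠ t.realize v) ∧
    ((¬ ∃ (β : Type) (σ : Fin k → L.Term β), s.subst σ = t.subst σ) ↔
      ∃ (A : Type) (_ : Fintype A) (_ : L.Structure A) (_ : Nonempty A),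
        ∀ v : Fin k → A, s.realize v ≠ t.realize v) := by
  have not_separated : (∃ (β : Type) (σ : Fin k → L.Term β), s.subst σ = t.subst σ) →
      ¬ ∃ (A : Type) (_ : L.Structure A) (_ : Nonempty A),
        ∀ v : Fin k → A, s.realize v ≠ t.realize v := by
    rintro ⟨β, σ, hσ⟩ ⟨A, _, ⟨a⟩, hA⟩
    exact hA (fun i => (σ i).realize fun _ => a)
      (by rw [← Term.realize_subst, hσ, Term.realize_subst])
  have separated : (¬ ∃ (β : Type) (σ : Fin k → L.Term β), s.subst σ = t.subst σ) →
      ∃ (A : Type) (_ : Fintype A) (_ : L.Structure A) (_ : Nonempty A),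
        ∀ v : Fin k → A, s.realize v ≠ t.realize v := by
    refine fun h => Equations.exists_finite_separating_of_isAffinelyRefutable
      ((Equations.isUnifiable_or_isAffinelyRefutable [(s, t)]).resolve_left ?_)
    rintro ⟨σ, hσ⟩
    exact h ⟨_, σ, hσ _ (List.mem_singleton_self _)⟩
  refine ⟨⟨not_separated, fun h => by_contra fun hu => h ?_⟩,
    ⟨separated, fun ⟨A, _, SA, nA, hA⟩ hu => not_separated hu ⟨A, SA, nA, hA⟩⟩⟩
  obtain ⟨A, _, SA, nA, hA⟩ := separated hu
  exact ⟨A, SA, nA, hA⟩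

/-- Terms s and t are unifiable iff they are NOT separated in any (nonempty) algebra;
equivalently, s and t cannot be unified iff there exists a finite algebra separating them.
(The signature has finitely many operation symbols.) -/
theorem unifiable_iff_not_separated {L : Language} [Finite (Σ n : ℕ, L.Functions n)]
    {k : ℕ} (s t : L.Term (Fin k)) :
    ((∃ (β : Type) (σ : Fin k → L.Term β), s.subst σ = t.subst σ) ↔
      ¬ ∃ (A : Type) (_ : L.Structure A) (_ : Nonempty A),
        ∀ v : Fin k → A, s.realize v ≠ t.realize v) ∧
    ((¬ ∃ (β : Type) (σ : Fin k → L.Term β), s.subst σ = t.subst σ) ↔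
      ∃ (A : Type) (_ : Fintype A) (_ : L.Structure A) (_ : Nonempty A),
        ∀ v : Fin k → A, s.realize v ≠ t.realize v) :=
  unifiable_iff_not_separated_general s t
end
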